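/- Let x be a stable g-matching, w ∈ W, and let (c, a) and (c', a') be disjoint essential w-pairs under x. Put z := x_w + 1^a − 1^c, z' := x_w + 1^{a'} − 1^{c'}, and y := x_w + 1^a − 1^c + 1^{a'} − 1^{c'}. Then: (i) y is acceptable for C_w (so both z + 1^{a'} − 1^{c'} and z' + 1^a − 1^c are acceptable); (ii) no edge d ∈ U_F^+(x) ∩ E_w is interesting for w under y; and (iii) the pair (c', a') remains essential under z and the pair (c, a) remains essential under z' (i.e., the corresponding shifted vectors are acceptable and no edge of U_F^+(x) ∩ E_w other than the pair's positive edge is interesting for w under them). -/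

import Mathlib

namespace SGMMStmt

/-- Data of the stable g-matching model: a bipartite graph with worker side `W`,
firm side `F`, edge set `E` with endpoint maps `ew`, `ef`, integer capacities `b`,
and a choice function at every vertex (acting on vectors `E → ℕ`, only the
coordinates on edges incident to the vertex being relevant). -/
structure Model (W F E : Type*) where
  ew : E → W
  ef : E → F
  b : E → ℕ
  Cw : W → (E → ℕ) → (E → ℕ)
  Cf : F → (E → ℕ) → (E → ℕ)

/-- An edge-simple closed alternating sequence `(a 0, c 0, a 1, c 1, …)`;
the data of a candidate rotation. -/
structure Cyc (E : Type*) where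
  k : ℕ
  hk : 0 < k
  a : Fin k → E
  c : Fin k → E

/-- Cyclically next index. -/
def Cyc.nxt {E : Type*} (R : Cyc E) (i : Fin R.k) : Fin R.k :=
  ⟨(i.1 + 1) % R.k, Nat.mod_lt _ R.hk⟩

/-- Two cycles are the same (as cyclic sequences) if they differ by a cyclic
shift of the indexing. -/
def Cyc.Same {E : Type*} (R R' : Cyc E) : Prop :=
  R.k = R'.k ∧ ∃ s : ℕ,
    (∀ i : Fin R.k, R'.a ⟨(i.1 + s) % R'.k, Nat.mod_lt _ R'.hk⟩ = R.a i) ∧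
    (∀ i : Fin R.k, R'.c ⟨(i.1 + s) % R'.k, Nat.mod_lt _ R'.hk⟩ = R.c i)

/-- The signed incidence vector `χ^R`: `+1` on the `a`-edges, `-1` on the `c`-edges. -/
def Cyc.chi {E : Type*} [DecidableEq E] (R : Cyc E) (e : E) : ℤ :=
  (if ∃ i, R.a i = e then 1 else 0) - (if ∃ i, R.c i = e then 1 else 0)

/-- The result `x + lam • χ^R` of shifting `x` along `R` with weight `lam`. -/
def Cyc.apply {E : Type*} [DecidableEq E] (R : Cyc E) (x : E → ℕ) (lam : ℕ) : E → ℕ :=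
  fun e => ((x e : ℤ) + (lam : ℤ) * R.chi e).toNat

variable {W F E : Type*} [Fintype E] [DecidableEq E] [DecidableEq W] [DecidableEq F]

/-- Membership in the integer box `{z : E → ℕ | z ≤ b}`. -/
def inBox (b z : E → ℕ) : Prop := ∀ e, z e ≤ b e

/-- `e` is interesting under `x` (for the choice function `C`). -/
def Interesting (b : E → ℕ) (C : (E → ℕ) → (E → ℕ)) (x : E → ℕ) (e : E) : Prop :=
  ∃ z', inBox b z' ∧ x e < z' e ∧ (∀ e', e' ≠ e → z' e' = x e') ∧ x e < C z' e

/-- `C` is a choice function for the coordinates `inc` (the star of a vertex),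
obeying (A1) consistency, (A2) substitutability, (A3) size monotonicity;
it acts as the identity outside `inc` and depends only on the `inc`-coordinates. -/
structure IsCF (b : E → ℕ) (inc : E → Prop) [DecidablePred inc]
    (C : (E → ℕ) → (E → ℕ)) : Prop where
  le : ∀ z, inBox b z → C z ≤ z
  offId : ∀ z e, ¬ inc e → C z e = z e
  localDep : ∀ z z' : E → ℕ, (∀ e, inc e → z e = z' e) → ∀ e, inc e → C z e = C z' e
  a1 : ∀ z z' : E → ℕ, inBox b z → z' ≤ z → C z ≤ z' → C z' = C z
  a2 : ∀ z z' : E → ℕ, inBox b z → z' ≤ z → C z ⊓ z' ≤ C z'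
  a3 : ∀ z z' : E → ℕ, inBox b z → z' ≤ z →
    ∑ e ∈ Finset.univ.filter inc, C z' e ≤ ∑ e ∈ Finset.univ.filter inc, C z e

/-- `e` is incident to worker `w`. -/
def Model.incW (M : Model W F E) (w : W) (e : E) : Prop := M.ew e = w

/-- `e` is incident to firm `f`. -/
def Model.incF (M : Model W F E) (f : F) (e : E) : Prop := M.ef e = f

instance (M : Model W F E) (w : W) : DecidablePred (M.incW w) :=
  fun e => inferInstanceAs (Decidable (M.ew e = w))

instance (M : Model W F E) (f : F) : DecidablePred (M.incF f) :=
  fun e => inferInstanceAs (Decidable (M.ef e = f))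

/-- All choice functions of the model satisfy the axioms. -/
structure Model.Valid (M : Model W F E) : Prop where
  cfW : ∀ w : W, IsCF M.b (M.incW w) (M.Cw w)
  cfF : ∀ f : F, IsCF M.b (M.incF f) (M.Cf f)

/-- `x` is a g-matching: it lies in the box and is acceptable for every vertex. -/
def Model.IsGM (M : Model W F E) (x : E → ℕ) : Prop :=
  inBox M.b x ∧ (∀ w, M.Cw w x = x) ∧ (∀ f, M.Cf f x = x)

/-- `e` is interesting for the worker `w` under `x`. -/
def Model.IntW (M : Model W F E) (w : W) (x : E → ℕ) (e : E) : Prop :=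
  Interesting M.b (M.Cw w) x e

/-- `e` is interesting for the firm `f` under `x`. -/
def Model.IntF (M : Model W F E) (f : F) (x : E → ℕ) (e : E) : Prop :=
  Interesting M.b (M.Cf f) x e

/-- `e` blocks `x`: it is interesting for both of its endpoints. -/
def Model.Blocks (M : Model W F E) (x : E → ℕ) (e : E) : Prop :=
  M.IntW (M.ew e) x e ∧ M.IntF (M.ef e) x e

/-- `x` is a stable g-matching. -/
def Model.Stable (M : Model W F E) (x : E → ℕ) : Prop :=
  M.IsGM x ∧ ∀ e, ¬ M.Blocks x e

/-- `e ∈ U_F^+(x)`: `e` is interesting for its `F`-endpoint under `x`. -/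
def Model.UFpos (M : Model W F E) (x : E → ℕ) (e : E) : Prop :=
  M.IntF (M.ef e) x e

/-- `e ∈ U_F^-(x)`: `x e > 0` and `e` is not interesting for its `F`-endpoint under `x`. -/
def Model.UFneg (M : Model W F E) (x : E → ℕ) (e : E) : Prop :=
  0 < x e ∧ ¬ M.IntF (M.ef e) x e

/-- `(a, c)` is a legal `f`-pair under `x`: distinct edges of `E_f` with
`C_f (x + 1^a) = x + 1^a - 1^c`. -/
def Model.LegalFPair (M : Model W F E) (x : E → ℕ) (f : F) (a c : E) : Prop :=
  M.incF f a ∧ M.incF f c ∧ a ≠ c ∧ x a < M.b a ∧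
    M.Cf f (x + Pi.single a 1) + Pi.single c 1 = x + Pi.single a 1

/-- `(c, a)` is a legal `w`-pair under `x`: `c ∈ E_w ∩ U_F^-(x)`, `a ∈ E_w ∩ U_F^+(x)`,
and `x + 1^a - 1^c` is acceptable for `C_w`. -/
def Model.LegalWPair (M : Model W F E) (x : E → ℕ) (w : W) (c a : E) : Prop :=
  M.incW w c ∧ M.incW w a ∧ c ≠ a ∧ M.UFneg x c ∧ M.UFpos x a ∧
    M.Cw w (x + Pi.single a 1 - Pi.single c 1) = x + Pi.single a 1 - Pi.single c 1

/-- `(c, a)` is an essential `w`-pair under `x`: a legal `w`-pair such that no edge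
`d ∈ (U_F^+(x) ∩ E_w) - {a}` is interesting for `w` under `x + 1^a - 1^c`. -/
def Model.EssWPair (M : Model W F E) (x : E → ℕ) (w : W) (c a : E) : Prop :=
  M.LegalWPair x w c a ∧
    ∀ d, M.incW w d → M.UFpos x d → d ≠ a →
      ¬ M.IntW w (x + Pi.single a 1 - Pi.single c 1) d

/-- The preference relation `x ≺_F y` (for the firm side), on the `E_f`-coordinates. -/
def Model.PrecF (M : Model W F E) (x y : E → ℕ) : Prop :=
  x ≠ y ∧ ∀ f e, M.incF f e → M.Cf f (x ⊔ y) e = y e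

/-- `R` is a rotation applicable to `x`: an edge-simple alternating cycle whose
consecutive pairs are legal `f`-pairs and essential `w`-pairs under `x`. -/
def Model.IsRotation (M : Model W F E) (x : E → ℕ) (R : Cyc E) : Prop :=
  Function.Injective R.a ∧ Function.Injective R.c ∧ (∀ i j, R.a i ≠ R.c j) ∧
  (∀ i, M.ef (R.a i) = M.ef (R.c i) ∧
    M.LegalFPair x (M.ef (R.a i)) (R.a i) (R.c i)) ∧
  (∀ i, M.ew (R.c i) = M.ew (R.a (R.nxt i)) ∧
    M.EssWPair x (M.ew (R.c i)) (R.c i) (R.a (R.nxt i)))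

/-- `lam` is a feasible weight for `R` at `x`: every intermediate shift is stable. -/
def Model.Feasible (M : Model W F E) (x : E → ℕ) (R : Cyc E) (lam : ℕ) : Prop :=
  ∀ j, 1 ≤ j → j ≤ lam → M.Stable (R.apply x j)

/-- `t = τ_R(x)` is the maximal feasible weight for `R` at `x`. -/
def Model.IsMaxWeight (M : Model W F E) (x : E → ℕ) (R : Cyc E) (t : ℕ) : Prop :=
  1 ≤ t ∧ M.Feasible x R t ∧ ∀ t', M.Feasible x R t' → t' ≤ t

/-- A route: a sequence of stable g-matchings, each obtained from the previous one
by shifting along an applicable rotation with a feasible positive weight. -/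
structure Route (M : Model W F E) where
  N : ℕ
  xs : ℕ → E → ℕ
  rot : ℕ → Cyc E
  lam : ℕ → ℕ
  stable0 : M.Stable (xs 0)
  isrot : ∀ i < N, M.IsRotation (xs i) (rot i)
  lam_pos : ∀ i < N, 1 ≤ lam i
  feas : ∀ i < N, M.Feasible (xs i) (rot i) (lam i)
  step : ∀ i < N, xs (i + 1) = (rot i).apply (xs i) (lam i)

/-- A route is non-excessive: if the same rotation (as a cycle) is used twice, the
earlier occurrence is used with its maximal feasible weight. -/
def Route.NonExcessive {M : Model W F E} (T : Route M) : Prop :=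
  ∀ i j, i < j → j < T.N → (T.rot i).Same (T.rot j) →
    M.IsMaxWeight (T.xs i) (T.rot i) (T.lam i)

/-- A route is principal: every rotation is applied with its maximal feasible weight. -/
def Route.Principal {M : Model W F E} (T : Route M) : Prop :=
  ∀ i < T.N, M.IsMaxWeight (T.xs i) (T.rot i) (T.lam i)

open scoped Classical in
/-- The number of steps of the route using the rotation `R` (as a cycle) with weight `l`. -/
noncomputable def Route.count {M : Model W F E} (T : Route M) (R : Cyc E) (l : ℕ) : ℕ :=
  ((Finset.range T.N).filter (fun i => (T.rot i).Same R ∧ T.lam i = l)).card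

/-!
Write `z = x + 1^a - 1^c`, `z' = x + 1^{a'} - 1^{c'}` and `y` for the double exchange.
Essentiality of `(c, a)` says that, starting from the acceptable vector `z`, every edge of
`(U_F^+(x) ∩ E_w) - {a}` is rejected; by substitutability and consistency `C_w` therefore
returns `z` on any box vector `z ⊔ u` that exceeds `z` only on such edges, and hence keeps
`u ⊓ z` when choosing from `u`. The vector `y` lies below `z` off `a'` and below `z'` off `a`,
so `C_w` keeps all of `y`. If some `d ∈ U_F^+(x) ∩ E_w` were interesting under `y`, the same
argument would make `y + 1^d` acceptable; but `y + 1^d` lies below `z ⊔ (y + 1^d)`, whose choice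
`z` is one unit smaller, contradicting size monotonicity.
-/

section Box

omit [Fintype E] [DecidableEq E]

variable {b : E → ℕ}

theorem inBox.mono {u m : E → ℕ} (hm : inBox b m) (hum : u ≤ m) : inBox b u :=
  fun e => (hum e).trans (hm e)

theorem inBox.sup {u m : E → ℕ} (hu : inBox b u) (hm : inBox b m) : inBox b (u ⊔ m) :=
  fun e => sup_le (hu e) (hm e)

theorem Interesting.lt_bound {C : (E → ℕ) → (E → ℕ)} {v : E → ℕ} {e : E}
    (h : Interesting b C v e) : v e < b e := by
  obtain ⟨z, hz, hlt, -, -⟩ := h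
  exact hlt.trans_le (hz e)

end Box

section Exchange

omit [Fintype E]

def exchange (v : E → ℕ) (c a : E) : E → ℕ := v + Pi.single a 1 - Pi.single c 1

variable {v : E → ℕ} {c a c' a' e : E}

theorem add_single_le {z : E → ℕ} (hvz : v ≤ z) (hlt : v e < z e) :
    v + Pi.single e 1 ≤ z := by
  intro e'
  by_cases h : e' = e
  · subst h; simpa using hlt
  · simpa [h] using hvz e'

theorem exchange_apply (v : E → ℕ) (c a e : E) :
    exchange v c a e = v e + (if e = a then 1 else 0) - (if e = c then 1 else 0) := by
  simp [exchange, Pi.single_apply]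

theorem exchange_apply_le (he : e ≠ a) : exchange v c a e ≤ v e := by
  rw [exchange_apply, if_neg he]; omega

theorem exchange_apply_of_ne (ha : e ≠ a) (hc : e ≠ c) : exchange v c a e = v e := by
  simp [exchange_apply, ha, hc]

theorem exchange_add_single (hc : 1 ≤ v c) :
    exchange v c a + Pi.single c 1 = v + Pi.single a 1 := by
  funext e
  simp only [exchange_apply, Pi.add_apply, Pi.single_apply]
  split_ifs <;> subst_vars <;> omega

theorem add_add_sub_sub_eq_exchange_exchange (hca' : c ≠ a') :
    v + Pi.single a 1 + Pi.single a' 1 - Pi.single c 1 - Pi.single c' 1 =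
      exchange (exchange v c a) c' a' := by
  funext e
  simp only [exchange_apply, Pi.add_apply, Pi.sub_apply, Pi.single_apply]
  split_ifs <;> subst_vars <;> simp_all

theorem exchange_comm (hca' : c ≠ a') (hc'a : c' ≠ a) :
    exchange (exchange v c a) c' a' = exchange (exchange v c' a') c a := by
  rw [← add_add_sub_sub_eq_exchange_exchange hca', ← add_add_sub_sub_eq_exchange_exchange hc'a,
    add_right_comm v, tsub_right_comm]

theorem inBox.add_single {b : E → ℕ} (hv : inBox b v) (he : v e < b e) :
    inBox b (v + Pi.single e 1) := by
  intro e'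
  by_cases h : e' = e
  · subst h; simpa using he
  · simpa [Pi.single_apply, h] using hv e'

theorem inBox.exchange {b : E → ℕ} (hv : inBox b v) (ha : v a < b a) :
    inBox b (exchange v c a) :=
  (hv.add_single ha).mono tsub_le_self

end Exchange

section ChoiceFunction

variable {b : E → ℕ} {inc : E → Prop} [DecidablePred inc] {C : (E → ℕ) → (E → ℕ)}

theorem sum_filter_add_single (f : E → ℕ) {e : E} (he : inc e) :
    ∑ e' ∈ Finset.univ.filter inc, (f + Pi.single e 1 : E → ℕ) e' =
      ∑ e' ∈ Finset.univ.filter inc, f e' + 1 := by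
  simp [Finset.sum_add_distrib, Pi.single_apply, he]

theorem sum_filter_exchange {v : E → ℕ} {c a : E} (hc : inc c) (ha : inc a)
    (hvc : 1 ≤ v c) :
    ∑ e ∈ Finset.univ.filter inc, exchange v c a e = ∑ e ∈ Finset.univ.filter inc, v e := by
  have h : ∑ e ∈ Finset.univ.filter inc, (exchange v c a + Pi.single c 1 : E → ℕ) e =
      ∑ e ∈ Finset.univ.filter inc, (v + Pi.single a 1 : E → ℕ) e := by
    rw [exchange_add_single hvc]
  rw [sum_filter_add_single _ hc, sum_filter_add_single _ ha] at h
  omega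

theorem IsCF.lt_choice_add_single_of_interesting (cf : IsCF b inc C) {v : E → ℕ} {e : E}
    (h : Interesting b C v e) : v e < C (v + Pi.single e 1) e := by
  obtain ⟨z, hz, hlt, hoff, hch⟩ := h
  have hvz : v ≤ z := fun e' => by
    by_cases h : e' = e
    · exact h ▸ hlt.le
    · exact (hoff e' h).ge
  have := cf.a2 z _ hz (add_single_le hvz hlt) e
  simp only [Pi.inf_apply, Pi.add_apply, Pi.single_eq_same, inf_le_iff] at this
  omega

theorem IsCF.choice_eq_of_not_interesting (cf : IsCF b inc C) {v m : E → ℕ} (hv : C v = v)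
    (hm : inBox b m) (hvm : v ≤ m) (hexc : ∀ e, v e < m e → ¬ Interesting b C v e) :
    C m = v := by
  have hCm : C m ≤ v := by
    intro e
    by_cases he : v e < m e
    · have hstep : v + Pi.single e 1 ≤ m := add_single_le hvm he
      have hrej : C (v + Pi.single e 1) e ≤ v e := by
        by_contra h
        exact hexc e he ⟨_, hm.mono hstep, by simp, fun e' h => by simp [h], not_le.1 h⟩
      have := cf.a2 m _ hm hstep e
      simp only [Pi.inf_apply, Pi.add_apply, Pi.single_eq_same, inf_le_iff] at this
      rcases this with h | h
      · exact h.trans hrej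
      · omega
    · exact (cf.le m hm e).trans (not_lt.1 he)
  exact (cf.a1 m v hm hvm hCm).symm.trans hv

omit [DecidableEq E] in
theorem IsCF.sum_le_of_le_choice (cf : IsCF b inc C) {u m : E → ℕ} (hm : inBox b m)
    (hum : u ≤ m) (hu : u ≤ C u) :
    ∑ e ∈ Finset.univ.filter inc, u e ≤ ∑ e ∈ Finset.univ.filter inc, C m e :=
  (Finset.sum_le_sum fun e _ => hu e).trans (cf.a3 m u hm hum)

end ChoiceFunction

section EssentialPairs

variable {M : Model W F E} {x : E → ℕ} {w : W} {c a c' a' : E}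

section

omit [Fintype E] [DecidableEq W] [DecidableEq F]

def Model.IsAlternative (M : Model W F E) (x : E → ℕ) (w : W) (a e : E) : Prop :=
  M.incW w e ∧ M.UFpos x e ∧ e ≠ a

theorem Model.EssWPair.incW_fst (h : M.EssWPair x w c a) : M.incW w c := h.1.1

theorem Model.EssWPair.incW_snd (h : M.EssWPair x w c a) : M.incW w a := h.1.2.1

theorem Model.EssWPair.one_le_fst (h : M.EssWPair x w c a) : 1 ≤ x c := h.1.2.2.2.1.1

theorem Model.EssWPair.uFpos_snd (h : M.EssWPair x w c a) : M.UFpos x a := h.1.2.2.2.2.1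

theorem Model.EssWPair.choice_exchange (h : M.EssWPair x w c a) :
    M.Cw w (exchange x c a) = exchange x c a := h.1.2.2.2.2.2

theorem Model.EssWPair.not_intW_of_isAlternative (h : M.EssWPair x w c a) {e : E}
    (he : M.IsAlternative x w a e) : ¬ M.IntW w (exchange x c a) e :=
  h.2 e he.1 he.2.1 he.2.2

theorem Model.EssWPair.inBox_exchange (h : M.EssWPair x w c a) (hx : inBox M.b x) :
    inBox M.b (exchange x c a) :=
  hx.exchange h.uFpos_snd.lt_bound

theorem Model.EssWPair.inBox_exchange_exchange (h₁ : M.EssWPair x w c a)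
    (h₂ : M.EssWPair x w c' a') (hx : inBox M.b x) (haa : a ≠ a') :
    inBox M.b (exchange (exchange x c a) c' a') :=
  (h₁.inBox_exchange hx).exchange ((exchange_apply_le haa.symm).trans_lt h₂.uFpos_snd.lt_bound)

theorem Model.EssWPair.isAlternative_of_exchange_lt (h₂ : M.EssWPair x w c' a') (haa : a ≠ a')
    {u : E → ℕ}
    (hexc : ∀ e, exchange (exchange x c a) c' a' e < u e → M.IsAlternative x w a e)
    {e : E} (he : exchange x c a e < u e) : M.IsAlternative x w a e := by
  by_cases hea : e = a'
  · exact hea ▸ ⟨h₂.incW_snd, h₂.uFpos_snd, haa.symm⟩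
  · exact hexc e ((exchange_apply_le hea).trans_lt he)

end

theorem Model.EssWPair.choice_sup_eq (hM : M.Valid) (h : M.EssWPair x w c a)
    (hx : inBox M.b x) {u : E → ℕ} (hu : inBox M.b u)
    (hexc : ∀ e, exchange x c a e < u e → M.IsAlternative x w a e) :
    M.Cw w (exchange x c a ⊔ u) = exchange x c a :=
  (hM.cfW w).choice_eq_of_not_interesting h.choice_exchange ((h.inBox_exchange hx).sup hu)
    le_sup_left fun e he => h.not_intW_of_isAlternative (hexc e (by simpa using he))

theorem Model.EssWPair.inf_le_choice (hM : M.Valid) (h : M.EssWPair x w c a)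
    (hx : inBox M.b x) {u : E → ℕ} (hu : inBox M.b u)
    (hexc : ∀ e, exchange x c a e < u e → M.IsAlternative x w a e) :
    exchange x c a ⊓ u ≤ M.Cw w u := by
  have := (hM.cfW w).a2 _ u ((h.inBox_exchange hx).sup hu) le_sup_right
  rwa [h.choice_sup_eq hM hx hu hexc] at this

theorem Model.EssWPair.le_choice_apply (hM : M.Valid) (h₁ : M.EssWPair x w c a)
    (h₂ : M.EssWPair x w c' a') (hx : inBox M.b x) (haa : a ≠ a') {u : E → ℕ}
    (hu : inBox M.b u)
    (hexc : ∀ e, exchange (exchange x c a) c' a' e < u e → M.IsAlternative x w a e)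
    {e : E} (he : e ≠ a') (heu : u e ≤ exchange (exchange x c a) c' a' e) :
    u e ≤ M.Cw w u e :=
  (le_inf (heu.trans (exchange_apply_le he)) le_rfl).trans
    (h₁.inf_le_choice hM hx hu (fun _ => h₂.isAlternative_of_exchange_lt haa hexc) e)

theorem Model.EssWPair.choice_exchange_exchange (hM : M.Valid) (h₁ : M.EssWPair x w c a)
    (h₂ : M.EssWPair x w c' a') (hx : inBox M.b x) (hca' : c ≠ a') (hac' : a ≠ c')
    (haa : a ≠ a') :
    M.Cw w (exchange (exchange x c a) c' a') = exchange (exchange x c a) c' a' := by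
  have hbox := h₁.inBox_exchange_exchange h₂ hx haa
  refine le_antisymm ((hM.cfW w).le _ hbox) fun e => ?_
  by_cases hea : e = a'
  · rw [exchange_comm hca' hac'.symm] at hbox ⊢
    exact h₂.le_choice_apply hM h₁ hx haa.symm hbox (fun _ h => (lt_irrefl _ h).elim)
      (hea ▸ haa.symm) le_rfl
  · exact h₁.le_choice_apply hM h₂ hx haa hbox (fun _ h => (lt_irrefl _ h).elim) hea le_rfl

theorem Model.EssWPair.le_choice_of_exceeds_at (hM : M.Valid) (h₁ : M.EssWPair x w c a)
    (h₂ : M.EssWPair x w c' a') (hx : inBox M.b x) (hca' : c ≠ a') (hac' : a ≠ c')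
    (haa : a ≠ a') {d : E} (hd : M.incW w d) (hdU : M.UFpos x d) {u : E → ℕ}
    (hu : inBox M.b u) (hexc : ∀ e, exchange (exchange x c a) c' a' e < u e → e = d)
    (hdC : u d ≤ M.Cw w u d) : u ≤ M.Cw w u := by
  intro e
  by_cases hed : e = d
  · exact hed ▸ hdC
  have heu : u e ≤ exchange (exchange x c a) c' a' e := not_lt.1 fun h => hed (hexc e h)
  by_cases hside : e ≠ a' ∧ d ≠ a
  · exact h₁.le_choice_apply hM h₂ hx haa hu (fun e he => hexc e he ▸ ⟨hd, hdU, hside.2⟩)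
      hside.1 heu
  · obtain ⟨hea, hda'⟩ : e ≠ a ∧ d ≠ a' := by grind
    rw [exchange_comm hca' hac'.symm] at hexc heu
    exact h₂.le_choice_apply hM h₁ hx haa.symm hu
      (fun e he => hexc e he ▸ ⟨hd, hdU, hda'⟩) hea heu

theorem Model.EssWPair.sum_le_of_le_choice (hM : M.Valid) (h₁ : M.EssWPair x w c a)
    (h₂ : M.EssWPair x w c' a') (hx : inBox M.b x) (hcc : c ≠ c') (hac' : a ≠ c')
    (haa : a ≠ a') {u : E → ℕ} (hu : inBox M.b u)
    (hexc : ∀ e, exchange (exchange x c a) c' a' e < u e → M.IsAlternative x w a e)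
    (hle : u ≤ M.Cw w u) :
    ∑ e ∈ Finset.univ.filter (M.incW w), u e ≤
      ∑ e ∈ Finset.univ.filter (M.incW w), exchange (exchange x c a) c' a' e := by
  have hc' : 1 ≤ exchange x c a c' := by
    rw [exchange_apply_of_ne hac'.symm hcc.symm]; exact h₂.one_le_fst
  have hsize := (hM.cfW w).sum_le_of_le_choice ((h₁.inBox_exchange hx).sup hu) le_sup_right hle
  rwa [h₁.choice_sup_eq hM hx hu fun _ => h₂.isAlternative_of_exchange_lt haa hexc,
    ← sum_filter_exchange h₂.incW_fst h₂.incW_snd hc'] at hsize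

theorem Model.EssWPair.not_intW_exchange_exchange (hM : M.Valid) (h₁ : M.EssWPair x w c a)
    (h₂ : M.EssWPair x w c' a') (hx : inBox M.b x) (hcc : c ≠ c') (hca' : c ≠ a')
    (hac' : a ≠ c') (haa : a ≠ a') {d : E} (hd : M.incW w d) (hdU : M.UFpos x d) :
    ¬ M.IntW w (exchange (exchange x c a) c' a') d := by
  intro hint
  set y := exchange (exchange x c a) c' a' with hy
  set u := y + Pi.single d 1 with hu_def
  have hu : inBox M.b u := (h₁.inBox_exchange_exchange h₂ hx haa).add_single hint.lt_bound
  have hexc : ∀ e, y e < u e → e = d := fun e he => by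
    by_contra hed; simp [hu_def, hed] at he
  have hle : u ≤ M.Cw w u := h₁.le_choice_of_exceeds_at hM h₂ hx hca' hac' haa hd hdU hu hexc
    (by simpa [hu_def] using (hM.cfW w).lt_choice_add_single_of_interesting hint)
  have hsize : ∑ e ∈ Finset.univ.filter (M.incW w), y e <
      ∑ e ∈ Finset.univ.filter (M.incW w), u e := by
    rw [hu_def, sum_filter_add_single _ hd]; omega
  by_cases hda : d = a
  · rw [hy, exchange_comm hca' hac'.symm] at hexc hsize
    exact hsize.not_ge (h₂.sum_le_of_le_choice hM h₁ hx hcc.symm hca'.symm haa.symm hu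
      (fun e he => hexc e he ▸ ⟨hd, hdU, hda ▸ haa⟩) hle)
  · exact hsize.not_ge (h₁.sum_le_of_le_choice hM h₂ hx hcc hac' haa hu
      (fun e he => hexc e he ▸ ⟨hd, hdU, hda⟩) hle)

end EssentialPairs

/-- Lemma 3.7: for disjoint essential `w`-pairs `(c, a)` and `(c', a')` under a stable
`x`, with `y := x + 1^a + 1^{a'} - 1^c - 1^{c'}`: (i) `y` is acceptable for `C_w`;
(ii) no edge of `U_F^+(x) ∩ E_w` is interesting for `w` under `y`; (iii) `(c', a')`
remains essential under `z := x + 1^a - 1^c`, and `(c, a)` remains essential under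
`z' := x + 1^{a'} - 1^{c'}`. -/
theorem statement7 (M : Model W F E) (hM : M.Valid)
    (x : E → ℕ) (hx : M.Stable x) (w : W) (c a c' a' : E)
    (h1 : M.EssWPair x w c a) (h2 : M.EssWPair x w c' a')
    (hcc : c ≠ c') (hca : c ≠ a') (hac : a ≠ c') (haa : a ≠ a') :
    (M.Cw w (x + Pi.single a 1 + Pi.single a' 1 - Pi.single c 1 - Pi.single c' 1)
        = x + Pi.single a 1 + Pi.single a' 1 - Pi.single c 1 - Pi.single c' 1) ∧
    (∀ d, M.incW w d → M.UFpos x d →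
        ¬ M.IntW w (x + Pi.single a 1 + Pi.single a' 1 - Pi.single c 1 - Pi.single c' 1) d) ∧
    ((M.Cw w ((x + Pi.single a 1 - Pi.single c 1) + Pi.single a' 1 - Pi.single c' 1)
        = (x + Pi.single a 1 - Pi.single c 1) + Pi.single a' 1 - Pi.single c' 1) ∧
      (∀ d, M.incW w d → M.UFpos x d → d ≠ a' →
        ¬ M.IntW w ((x + Pi.single a 1 - Pi.single c 1) + Pi.single a' 1 - Pi.single c' 1) d)) ∧
    ((M.Cw w ((x + Pi.single a' 1 - Pi.single c' 1) + Pi.single a 1 - Pi.single c 1)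
        = (x + Pi.single a' 1 - Pi.single c' 1) + Pi.single a 1 - Pi.single c 1) ∧
      (∀ d, M.incW w d → M.UFpos x d → d ≠ a →
        ¬ M.IntW w ((x + Pi.single a' 1 - Pi.single c' 1) + Pi.single a 1 - Pi.single c 1) d)) := by
  have hxb : inBox M.b x := hx.1.1
  have hchoice := h1.choice_exchange_exchange hM h2 hxb hca hac haa
  have hnotint d (hd : M.incW w d) (hdU : M.UFpos x d) :=
    h1.not_intW_exchange_exchange hM h2 hxb hcc hca hac haa hd hdU
  have hcomm : exchange (exchange x c' a') c a = exchange (exchange x c a) c' a' :=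
    (exchange_comm hca hac.symm).symm
  rw [add_add_sub_sub_eq_exchange_exchange hca]
  refine ⟨hchoice, hnotint, ⟨hchoice, fun d hd hdU _ => hnotint d hd hdU⟩, ?_⟩
  change M.Cw w (exchange (exchange x c' a') c a) = exchange (exchange x c' a') c a ∧
    ∀ d, M.incW w d → M.UFpos x d → d ≠ a →
      ¬ M.IntW w (exchange (exchange x c' a') c a) d
  rw [hcomm]
  exact ⟨hchoice, fun d hd hdU _ => hnotint d hd hdU⟩

end SGMMStmt
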